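/- (Exactness in the main example.) The sequence 0 ← F̄_{A′} ←(j*)− F̄^I_{A′} ←(∇*)− F̄^{M I}_{A′} is exact: the map j*, (j*f)_α = Σ_i (−1)^{|i|} D^i(f^i_α), is surjective onto F̄_{A′}, and ker j* = im ∇*, where (∇*χ)^i_α = Σ_μ ( D_μ χ^{μ i}_α + χ^{μ, i−e_μ}_α ) with terms having i^μ = 0 omitted. In particular j* ∘ ∇* = 0, and the quotient F̄^I_{A′} / im ∇* is isomorphic to F̄_{A′}. -/

import Mathlib

/-
Both maps are additive, and a finitely supported family is a finite sum of families concentrated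
at a single index, so everything reduces to such elementary families. If `χ` is concentrated at
`(μ, k, α)` with value `c`, then `∇*χ` has the two entries `D_μ c` at `k` and `c` at `k + e_μ`;
their images under `j*` cancel because `D^{k + e_μ} = D^k D_μ` for commuting `D_μ`, whence
`j* ∘ ∇* = 0`. Read the other way, the same identity moves an entry `c` at `k + e_μ` to the entry
`-D_μ c` at `k` modulo `im ∇*`. By induction on `|i|`, every `f` is congruent modulo `im ∇*` to the
family concentrated at `i = 0` with value `j* f`, so `ker j* ⊆ im ∇*`; the same families
concentrated at `i = 0` show that `j*` is onto.
-/

noncomputable section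

variable {𝔽 : Type*} [Field 𝔽] {F : Type*} [CommRing F] [Algebra 𝔽 F] {m : ℕ}
  {A A' : Type*}

/-- Membership in the space of divergences `Div F^M = {Σ_μ D_μ ψ^μ}`. -/
def IsDiv (D : Fin m → Derivation 𝔽 F F) (f : F) : Prop :=
  ∃ ψ : Fin m → F, f = ∑ μ, D μ (ψ μ)

/-- The evolutionary differentiation `ev_φ f = Σ_a φ^a · ∂_a f` (a finite sum). -/
def ev (pa : A → Derivation 𝔽 F F) (φ : A → F) (f : F) : F :=
  ∑ᶠ a, φ a * pa a f

/-- `(∇φ)^a_μ = D_μ φ^a + Σ_b Γ^a_{μb} · φ^b`; here `Γ b μ a` denotes `Γ^b_{μa}`. -/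
def nabla (D : Fin m → Derivation 𝔽 F F) (Γ : A → Fin m → A → F)
    (φ : A → F) (a : A) (μ : Fin m) : F :=
  D μ (φ a) + ∑ᶠ b, Γ a μ b * φ b

/-- `(∇*χ)_a = -Σ_μ D_μ χ^μ_a + Σ_{μ,b} Γ^b_{μa} · χ^μ_b`. -/
def nablaStar (D : Fin m → Derivation 𝔽 F F) (Γ : A → Fin m → A → F)
    (χ : Fin m → A → F) (a : A) : F :=
  -∑ μ, D μ (χ μ a) + ∑ᶠ b, ∑ μ, Γ b μ a * χ μ b

/-- The pairing `⟨f, φ⟩ = Σ_a f_a · φ^a`. -/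
def pair (f φ : A → F) : F := ∑ᶠ a, f a * φ a

/-- `D^i = D_1^{i^1} ∘ ⋯ ∘ D_m^{i^m}`. -/
def Dpow (D : Fin m → Derivation 𝔽 F F) (i : Fin m → ℕ) : F → F :=
  (List.finRange m).foldr (fun μ g => (⇑(D μ))^[i μ] ∘ g) id

/-- `|i| = i^1 + ⋯ + i^m`. -/
def msize {m : ℕ} (i : Fin m → ℕ) : ℕ := ∑ μ, i μ

/-- The differential operator `P(D)L = Σ_i P_i · D^i L`. -/
def applyP (D : Fin m → Derivation 𝔽 F F) (P : (Fin m → ℕ) → F) (L : F) : F :=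
  ∑ᶠ i, P i * Dpow D i L

/-- The Lagrange dual operator `P*(D)K = Σ_i (-1)^{|i|} D^i (P_i · K)`. -/
def applyPstar (D : Fin m → Derivation 𝔽 F F) (P : (Fin m → ℕ) → F) (K : F) : F :=
  ∑ᶠ i, (-1 : F) ^ msize i * Dpow D i (P i * K)

/-- The jet map `(jφ)^a = Σ_{i,α} j^a_{iα} · D^i φ^α`; here `jc a i α` denotes `j^a_{iα}`. -/
def jmap (D : Fin m → Derivation 𝔽 F F) (jc : A → (Fin m → ℕ) → A' → F)
    (φ : A' → F) (a : A) : F :=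
  ∑ᶠ i, ∑ᶠ α, jc a i α * Dpow D i (φ α)

/-- The Lagrange dual `(j*f)_α = Σ_{a,i} (-1)^{|i|} D^i (j^a_{iα} · f_a)`. -/
def jstar (D : Fin m → Derivation 𝔽 F F) (jc : A → (Fin m → ℕ) → A' → F)
    (f : A → F) (α : A') : F :=
  ∑ᶠ a, ∑ᶠ i, (-1 : F) ^ msize i * Dpow D i (jc a i α * f a)

/-- `(Λf)^α = Σ_{β,i} Λ^{αβ}_i · D^i f_β`; here `Λc α β i` denotes `Λ^{αβ}_i`. -/
def Lam (D : Fin m → Derivation 𝔽 F F) (Λc : A' → A' → (Fin m → ℕ) → F)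
    (f : A' → F) (α : A') : F :=
  ∑ᶠ β, ∑ᶠ i, Λc α β i * Dpow D i (f β)

/-- The Lagrange dual `(Λ*f)^α = Σ_{β,i} (-1)^{|i|} D^i (Λ^{βα}_i · f_β)`. -/
def LamStar (D : Fin m → Derivation 𝔽 F F) (Λc : A' → A' → (Fin m → ℕ) → F)
    (f : A' → F) (α : A') : F :=
  ∑ᶠ β, ∑ᶠ i, (-1 : F) ^ msize i * Dpow D i (Λc β α i * f β)

/-- The variational derivative `δR = j*(∂R)`, where `∂R = (∂_a R)`. -/
def vard (D : Fin m → Derivation 𝔽 F F) (pa : A → Derivation 𝔽 F F)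
    (jc : A → (Fin m → ℕ) → A' → F) (R : F) : A' → F :=
  jstar D jc (fun a => pa a R)

/-- The Hamiltonian vector `φ(R) = j(Λ(δR))`. -/
def hamv (D : Fin m → Derivation 𝔽 F F) (pa : A → Derivation 𝔽 F F)
    (jc : A → (Fin m → ℕ) → A' → F) (Λc : A' → A' → (Fin m → ℕ) → F) (R : F) : A → F :=
  jmap D jc (Lam D Λc (vard D pa jc R))

/-- The commutator `[ev_ψ, Λ]`, acting with coefficients `ev_ψ(Λ^{αβ}_i)`. -/
def evLam (D : Fin m → Derivation 𝔽 F F) (pa : A → Derivation 𝔽 F F)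
    (Λc : A' → A' → (Fin m → ℕ) → F) (ψ : A → F) (f : A' → F) (α : A') : F :=
  ∑ᶠ β, ∑ᶠ i, ev pa ψ (Λc α β i) * Dpow D i (f β)

/-- In the main example: `(j*f)_α = Σ_i (-1)^{|i|} D^i (f^i_α)`. -/
def jstarEx {𝔽 : Type*} [Field 𝔽] {F : Type*} [CommRing F] [Algebra 𝔽 F] {m : ℕ}
    {A' : Type*} (D : Fin m → Derivation 𝔽 F F)
    (f : (Fin m → ℕ) → A' → F) (α : A') : F :=
  ∑ᶠ i, (-1 : F) ^ msize i * Dpow D i (f i α)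

/-- In the main example: `(∇*χ)^i_α = Σ_μ (D_μ χ^{μ,i}_α + χ^{μ,i-e_μ}_α)`,
the term `χ^{μ,i-e_μ}_α` being omitted when `i^μ = 0`. -/
def nablaStarEx {𝔽 : Type*} [Field 𝔽] {F : Type*} [CommRing F] [Algebra 𝔽 F] {m : ℕ}
    {A' : Type*} (D : Fin m → Derivation 𝔽 F F)
    (χ : Fin m → (Fin m → ℕ) → A' → F) (i : Fin m → ℕ) (α : A') : F :=
  ∑ μ, (D μ (χ μ i α)
    + if i μ = 0 then 0 else χ μ (Function.update i μ (i μ - 1)) α)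

open Function

section FiniteSupport

theorem Function.hasFiniteSupport_single {X M : Type*} [DecidableEq X] [Zero M] (x : X) (c : M) :
    HasFiniteSupport (Pi.single x c) :=
  (Set.finite_singleton x).subset Pi.support_single_subset

theorem Function.HasFiniteSupport.uncurry_single {X Y M : Type*} [DecidableEq X] [Zero M] (x : X)
    {g : Y → M} (hg : HasFiniteSupport g) : HasFiniteSupport (uncurry (Pi.single x g)) :=
  ((Set.finite_singleton x).prod hg).subset fun ⟨x', y⟩ h => by
    by_cases hx : x' = x
    · subst hx
      exact ⟨rfl, by simpa using h⟩
    · simp [hx] at h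

variable {X Y Z M : Type*} [AddZeroClass M]

theorem Pi.uncurry₃_single_single_single [DecidableEq X] [DecidableEq Y] [DecidableEq Z]
    (x : X) (y : Y) (z : Z) (c : M) :
    (fun p : X × Y × Z =>
      (Pi.single x (Pi.single y (Pi.single z c)) : X → Y → Z → M) p.1 p.2.1 p.2.2) =
        Pi.single (x, y, z) c := by
  ext ⟨x', y', z'⟩
  simp [Pi.single_apply, ite_and, ite_apply]

theorem Function.HasFiniteSupport.induction [DecidableEq X] {P : (X → M) → Prop} (zero : P 0)
    (add : ∀ x c f, HasFiniteSupport f → P f → P (Pi.single x c + f))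
    {f : X → M} (hf : HasFiniteSupport f) : P f :=
  Finsupp.induction (motive := fun g : X →₀ M => P g) (Finsupp.ofSupportFinite f hf) zero
    fun x c g _ _ hg => by
      rw [Finsupp.coe_add, Finsupp.single_eq_pi_single]
      exact add x c g g.hasFiniteSupport hg

theorem Function.HasFiniteSupport.induction₂ [DecidableEq X] [DecidableEq Y]
    {P : (X → Y → M) → Prop} (zero : P 0)
    (add : ∀ x y c f, HasFiniteSupport (uncurry f) → P f →
      P (Pi.single x (Pi.single y c) + f))
    {f : X → Y → M} (hf : HasFiniteSupport (uncurry f)) : P f :=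
  hf.induction (P := fun g => P (curry g)) zero fun ⟨x, y⟩ c g hg hPg => by
    rw [← Pi.uncurry_single_single]
    exact add x y c (curry g) hg hPg

theorem Function.HasFiniteSupport.induction₃ [DecidableEq X] [DecidableEq Y] [DecidableEq Z]
    {P : (X → Y → Z → M) → Prop} (zero : P 0)
    (add : ∀ x y z c f, HasFiniteSupport (fun p : X × Y × Z => f p.1 p.2.1 p.2.2) → P f →
      P (Pi.single x (Pi.single y (Pi.single z c)) + f))
    {f : X → Y → Z → M} (hf : HasFiniteSupport fun p : X × Y × Z => f p.1 p.2.1 p.2.2) : P f :=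
  hf.induction (P := fun g => P fun x y z => g (x, y, z)) zero fun ⟨x, y, z⟩ c g hg hPg => by
    rw [← Pi.uncurry₃_single_single_single]
    exact add x y z c (fun x y z => g (x, y, z)) hg hPg

end FiniteSupport

section CommutingIterates

variable {ι α : Type*} {f : ι → α → α}

theorem commute_iterate_foldr_iterate (hf : ∀ a b, Function.Commute (f a) (f b)) (a : ι) (n : ℕ)
    (i : ι → ℕ) (l : List ι) :
    Function.Commute (f a)^[n] (l.foldr (fun b g => (f b)^[i b] ∘ g) id) := by
  induction l with
  | nil => exact fun _ => rfl
  | cons b l ih => exact ((hf a b).iterate_iterate n (i b)).comp_right ih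

theorem foldr_iterate_add (hf : ∀ a b, Function.Commute (f a) (f b)) (i j : ι → ℕ) (l : List ι) :
    l.foldr (fun b g => (f b)^[(i + j) b] ∘ g) id =
      l.foldr (fun b g => (f b)^[i b] ∘ g) id ∘ l.foldr (fun b g => (f b)^[j b] ∘ g) id := by
  induction l with
  | nil => rfl
  | cons b l ih =>
    ext x
    rw [List.foldr_cons, List.foldr_cons, List.foldr_cons, comp_apply, ih, comp_apply, comp_apply,
      comp_apply, Pi.add_apply, iterate_add_apply, commute_iterate_foldr_iterate hf b (j b) i l]
    rfl

theorem foldr_iterate_single [DecidableEq ι] (a : ι) {l : List ι} (hl : l.Nodup) :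
    l.foldr (fun b g => (f b)^[(Pi.single a 1 : ι → ℕ) b] ∘ g) id = if a ∈ l then f a else id := by
  induction l with
  | nil => rfl
  | cons b l ih =>
    obtain ⟨hb, hl⟩ := List.nodup_cons.mp hl
    rw [List.foldr_cons, ih hl]
    by_cases hab : b = a
    · subst hab
      simp [hb]
    · simp [hab, Ne.symm hab]

end CommutingIterates

section Dpow

variable (D : Fin m → Derivation 𝔽 F F)

theorem Dpow_map_zero (i : Fin m → ℕ) : Dpow D i 0 = 0 := by
  unfold Dpow
  induction List.finRange m with
  | nil => rfl
  | cons μ l ih => simp [ih, iterate_map_zero]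

theorem Dpow_map_add (i : Fin m → ℕ) (x y : F) : Dpow D i (x + y) = Dpow D i x + Dpow D i y := by
  unfold Dpow
  induction List.finRange m with
  | nil => rfl
  | cons μ l ih => simp [ih, iterate_map_add]

theorem Dpow_zero (x : F) : Dpow D 0 x = x := by
  simp [Dpow]

theorem Dpow_single (μ : Fin m) (x : F) : Dpow D (Pi.single μ 1) x = D μ x := by
  rw [Dpow, foldr_iterate_single (f := fun μ => ⇑(D μ)) μ (List.nodup_finRange m),
    if_pos (List.mem_finRange μ)]

variable {D} (hD : ∀ μ ν (f : F), D μ (D ν f) = D ν (D μ f))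
include hD

theorem Dpow_add_apply (i j : Fin m → ℕ) (x : F) : Dpow D (i + j) x = Dpow D i (Dpow D j x) :=
  congrFun (foldr_iterate_add (f := fun μ => ⇑(D μ)) (fun μ ν => hD μ ν) i j _) x

theorem Dpow_add_single (i : Fin m → ℕ) (μ : Fin m) (x : F) :
    Dpow D (i + Pi.single μ 1) x = Dpow D i (D μ x) := by
  rw [Dpow_add_apply hD, Dpow_single]

end Dpow

section Msize

theorem msize_zero : msize (0 : Fin m → ℕ) = 0 := by
  simp [msize]

theorem msize_eq_zero {i : Fin m → ℕ} : msize i = 0 ↔ i = 0 := by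
  simp [msize, Finset.sum_eq_zero_iff, funext_iff]

theorem msize_add_single (i : Fin m → ℕ) (μ : Fin m) :
    msize (i + Pi.single μ 1) = msize i + 1 := by
  simp [msize, Finset.sum_add_distrib]

theorem exists_eq_add_single_of_ne_zero {i : Fin m → ℕ} (hi : i ≠ 0) :
    ∃ (k : Fin m → ℕ) (μ : Fin m), i = k + Pi.single μ 1 := by
  obtain ⟨μ, hμ⟩ := Function.ne_iff.mp hi
  refine ⟨i - Pi.single μ 1, μ, ?_⟩
  ext ν
  by_cases h : ν = μ
  · subst h
    simp only [ne_eq, Pi.zero_apply] at hμ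
    simp only [Pi.add_apply, Pi.sub_apply, Pi.single_eq_same]
    omega
  · simp [h]

theorem update_sub_one_eq_iff {i k : Fin m → ℕ} {μ : Fin m} (hi : i μ ≠ 0) :
    update i μ (i μ - 1) = k ↔ i = k + Pi.single μ 1 := by
  constructor <;> rintro rfl <;> ext ν <;> by_cases hν : ν = μ
  · subst hν
    simp only [update_self, Pi.add_apply, Pi.single_eq_same]
    omega
  all_goals simp [hν]

end Msize

section Operators

variable (D : Fin m → Derivation 𝔽 F F)

theorem jstarEx_zero : jstarEx D (0 : (Fin m → ℕ) → A' → F) = 0 := by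
  ext α
  simp [jstarEx, Dpow_map_zero]

theorem jstarEx_add {f g : (Fin m → ℕ) → A' → F} (hf : HasFiniteSupport (uncurry f))
    (hg : HasFiniteSupport (uncurry g)) : jstarEx D (f + g) = jstarEx D f + jstarEx D g := by
  ext α
  have slice (h : (Fin m → ℕ) → A' → F) (hh : HasFiniteSupport (uncurry h)) :
      HasFiniteSupport fun i => (-1 : F) ^ msize i * Dpow D i (h i α) :=
    (Set.Finite.image Prod.fst hh).subset fun i hi =>
      ⟨(i, α), fun h0 => hi (by simp [show h i α = 0 from h0, Dpow_map_zero]), rfl⟩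
  simp only [jstarEx, Pi.add_apply, Dpow_map_add, mul_add]
  exact finsum_add_distrib (slice f hf) (slice g hg)

theorem jstarEx_single (i : Fin m → ℕ) (g : A' → F) :
    jstarEx D (Pi.single i g) = fun α => (-1) ^ msize i * Dpow D i (g α) := by
  ext α
  rw [jstarEx, finsum_eq_single _ i fun j hj => by simp [hj, Dpow_map_zero]]
  simp

theorem jstarEx_single_zero (g : A' → F) : jstarEx D (Pi.single 0 g) = g := by
  rw [jstarEx_single]
  ext α
  simp [msize_zero, Dpow_zero]

theorem jstarEx_single_single [DecidableEq A'] (i : Fin m → ℕ) (α : A') (c : F) :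
    jstarEx D (Pi.single i (Pi.single α c)) = Pi.single α ((-1) ^ msize i * Dpow D i c) := by
  rw [jstarEx_single]
  ext β
  by_cases h : β = α <;> simp [h, Dpow_map_zero]

theorem nablaStarEx_zero : nablaStarEx D (0 : Fin m → (Fin m → ℕ) → A' → F) = 0 := by
  ext
  simp [nablaStarEx]

theorem nablaStarEx_add (χ ψ : Fin m → (Fin m → ℕ) → A' → F) :
    nablaStarEx D (χ + ψ) = nablaStarEx D χ + nablaStarEx D ψ := by
  ext i α
  simp only [nablaStarEx, Pi.add_apply, map_add, ← Finset.sum_add_distrib]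
  refine Finset.sum_congr rfl fun μ _ => ?_
  split_ifs <;> abel

theorem nablaStarEx_neg (χ : Fin m → (Fin m → ℕ) → A' → F) :
    nablaStarEx D (-χ) = -nablaStarEx D χ :=
  map_neg (AddMonoidHom.mk' (nablaStarEx D) (nablaStarEx_add D)) χ

theorem nablaStarEx_single [DecidableEq A'] (μ : Fin m) (k : Fin m → ℕ) (α : A') (c : F) :
    nablaStarEx D (Pi.single μ (Pi.single k (Pi.single α c))) =
      Pi.single k (Pi.single α (D μ c)) + Pi.single (k + Pi.single μ 1) (Pi.single α c) := by
  ext i β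
  rw [nablaStarEx, Finset.sum_eq_single μ (fun ν _ hν => by simp [hν]) (by simp)]
  simp only [Pi.single_eq_same, Pi.add_apply]
  congr 1
  · by_cases hk : i = k <;> by_cases hβ : β = α <;> simp [hk, hβ]
  · split_ifs with hi
    · have : i ≠ k + Pi.single μ 1 := fun h => by simp [h] at hi
      simp [this]
    · simp only [Pi.single_apply, update_sub_one_eq_iff hi]

end Operators

section Exactness

variable (D : Fin m → Derivation 𝔽 F F)

def nablaStarRange : AddSubgroup ((Fin m → ℕ) → A' → F) where
  carrier := {f | ∃ χ : Fin m → (Fin m → ℕ) → A' → F,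
    HasFiniteSupport (fun p : Fin m × (Fin m → ℕ) × A' => χ p.1 p.2.1 p.2.2) ∧ nablaStarEx D χ = f}
  zero_mem' := ⟨0, by simp [HasFiniteSupport], nablaStarEx_zero D⟩
  add_mem' := by
    rintro _ _ ⟨χ, hχ, rfl⟩ ⟨ψ, hψ, rfl⟩
    exact ⟨χ + ψ, hχ.add hψ, nablaStarEx_add D χ ψ⟩
  neg_mem' := by
    rintro _ ⟨χ, hχ, rfl⟩
    exact ⟨-χ, hχ.neg, nablaStarEx_neg D χ⟩

theorem hasFiniteSupport_single_single_single [DecidableEq A'] (μ : Fin m) (k : Fin m → ℕ)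
    (α : A') (c : F) :
    HasFiniteSupport fun p : Fin m × (Fin m → ℕ) × A' =>
      (Pi.single μ (Pi.single k (Pi.single α c)) : Fin m → (Fin m → ℕ) → A' → F)
        p.1 p.2.1 p.2.2 := by
  rw [Pi.uncurry₃_single_single_single]
  exact hasFiniteSupport_single _ c

theorem nablaStarEx_single_mem_nablaStarRange [DecidableEq A'] (μ : Fin m) (k : Fin m → ℕ)
    (α : A') (c : F) :
    nablaStarEx D (Pi.single μ (Pi.single k (Pi.single α c))) ∈ nablaStarRange D :=
  ⟨_, hasFiniteSupport_single_single_single μ k α c, rfl⟩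

theorem hasFiniteSupport_nablaStarEx {χ : Fin m → (Fin m → ℕ) → A' → F}
    (hχ : HasFiniteSupport fun p : Fin m × (Fin m → ℕ) × A' => χ p.1 p.2.1 p.2.2) :
    HasFiniteSupport (uncurry (nablaStarEx D χ)) := by
  classical
  refine HasFiniteSupport.induction₃ (P := fun χ => HasFiniteSupport (uncurry (nablaStarEx D χ)))
    ?_ (fun μ k α c χ _ ih => ?_) hχ
  · rw [nablaStarEx_zero]
    exact Set.finite_empty.subset fun _ h => h rfl
  · rw [nablaStarEx_add, nablaStarEx_single]
    exact (((hasFiniteSupport_single α _).uncurry_single k).add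
      ((hasFiniteSupport_single α c).uncurry_single _)).add ih

variable {D} (hD : ∀ μ ν (f : F), D μ (D ν f) = D ν (D μ f))
include hD

theorem jstarEx_nablaStarEx_single [DecidableEq A'] (μ : Fin m) (k : Fin m → ℕ) (α : A') (c : F) :
    jstarEx D (nablaStarEx D (Pi.single μ (Pi.single k (Pi.single α c)))) = 0 := by
  rw [nablaStarEx_single, jstarEx_add D ((hasFiniteSupport_single α _).uncurry_single k)
    ((hasFiniteSupport_single α c).uncurry_single _), jstarEx_single_single, jstarEx_single_single,
    ← Pi.single_add, msize_add_single, Dpow_add_single hD, pow_succ]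
  convert Pi.single_zero α
  ring

theorem jstarEx_nablaStarEx {χ : Fin m → (Fin m → ℕ) → A' → F}
    (hχ : HasFiniteSupport fun p : Fin m × (Fin m → ℕ) × A' => χ p.1 p.2.1 p.2.2) :
    jstarEx D (nablaStarEx D χ) = 0 := by
  classical
  refine HasFiniteSupport.induction₃ (P := fun χ => jstarEx D (nablaStarEx D χ) = 0)
    ?_ (fun μ k α c χ hχ ih => ?_) hχ
  · rw [nablaStarEx_zero, jstarEx_zero]
  · rw [nablaStarEx_add, jstarEx_add D
      (hasFiniteSupport_nablaStarEx D (hasFiniteSupport_single_single_single μ k α c))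
      (hasFiniteSupport_nablaStarEx D hχ), jstarEx_nablaStarEx_single hD, ih, add_zero]

theorem single_sub_single_zero_mem_nablaStarRange [DecidableEq A'] (α : A') (i : Fin m → ℕ)
    (c : F) :
    Pi.single i (Pi.single α c) - Pi.single 0 (Pi.single α ((-1) ^ msize i * Dpow D i c)) ∈
      nablaStarRange D := by
  induction hn : msize i generalizing i c with
  | zero =>
    obtain rfl := msize_eq_zero.mp hn
    simp [Dpow_zero]
  | succ n ih =>
    have hi : i ≠ 0 := by
      rintro rfl
      simp [msize_zero] at hn
    obtain ⟨k, μ, rfl⟩ := exists_eq_add_single_of_ne_zero hi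
    have hk : msize k = n := by rw [msize_add_single] at hn; omega
    have key := sub_mem (nablaStarEx_single_mem_nablaStarRange D μ k α c) (ih k (D μ c) hk)
    rw [nablaStarEx_single] at key
    convert key using 1
    rw [Dpow_add_single hD, pow_succ, mul_neg_one, neg_mul, Pi.single_neg, Pi.single_neg]
    abel

theorem sub_single_zero_jstarEx_mem_nablaStarRange {f : (Fin m → ℕ) → A' → F}
    (hf : HasFiniteSupport (uncurry f)) : f - Pi.single 0 (jstarEx D f) ∈ nablaStarRange D := by
  classical
  refine HasFiniteSupport.induction₂
    (P := fun f => f - Pi.single 0 (jstarEx D f) ∈ nablaStarRange D) ?_ (fun i α c f hf ih => ?_) hf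
  · simp [jstarEx_zero]
  · rw [jstarEx_add D ((hasFiniteSupport_single α c).uncurry_single i) hf, jstarEx_single_single,
      Pi.single_add]
    convert add_mem (single_sub_single_zero_mem_nablaStarRange hD α i c) ih using 1
    abel

end Exactness

/-- exactness in the main example: the sequence
`0 ← F̄_{A'} ←(j*)- F̄^I_{A'} ←(∇*)- F̄^{MI}_{A'}` is exact: `j*` is surjective
onto finitely supported families, `j* ∘ ∇* = 0`, and `ker j* = im ∇*`
(so `F̄^I_{A'}/im ∇* ≅ F̄_{A'}`). -/
theorem stmt_19
    {F : Type*} [CommRing F] [Algebra ℚ F] {m : ℕ} {A' : Type*}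
    (D : Fin m → Derivation ℚ F F)
    (hDcomm : ∀ μ ν (f : F), D μ (D ν f) = D ν (D μ f)) :
    (∀ g : A' → F, {α : A' | g α ≠ 0}.Finite →
      ∃ f : (Fin m → ℕ) → A' → F,
        {p : (Fin m → ℕ) × A' | f p.1 p.2 ≠ 0}.Finite ∧
        ∀ α : A', jstarEx D f α = g α)
    ∧ (∀ χ : Fin m → (Fin m → ℕ) → A' → F,
        {p : Fin m × (Fin m → ℕ) × A' | χ p.1 p.2.1 p.2.2 ≠ 0}.Finite →
        ∀ α : A', jstarEx D (nablaStarEx D χ) α = 0)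
    ∧ (∀ f : (Fin m → ℕ) → A' → F,
        {p : (Fin m → ℕ) × A' | f p.1 p.2 ≠ 0}.Finite →
        (∀ α : A', jstarEx D f α = 0) →
        ∃ χ : Fin m → (Fin m → ℕ) → A' → F,
          {p : Fin m × (Fin m → ℕ) × A' | χ p.1 p.2.1 p.2.2 ≠ 0}.Finite ∧
          ∀ (i : Fin m → ℕ) (α : A'), f i α = nablaStarEx D χ i α) := by
  classical
  refine ⟨fun g hg => ⟨Pi.single 0 g, HasFiniteSupport.uncurry_single 0 hg,
    congrFun (jstarEx_single_zero D g)⟩, fun χ hχ => congrFun (jstarEx_nablaStarEx hDcomm hχ), fun f hf hker => ?_⟩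
  obtain ⟨χ, hχ, hχf⟩ := sub_single_zero_jstarEx_mem_nablaStarRange hDcomm hf
  rw [show jstarEx D f = 0 from funext hker, Pi.single_zero, sub_zero] at hχf
  exact ⟨χ, hχ, fun i α => by rw [hχf]⟩
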